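/- In any imploid P satisfying exchange (a ⊸ (b ⊸ c) ≤ b ⊸ (a ⊸ c)), if I ≤ Γ ⊸* (a ⊸ b) and I ≤ Δ ⊸* a then I ≤ (Γ ++ Δ) ⊸* b, where for a list [c₁,...,cₙ] we define [c₁,...,cₙ] ⊸* d := c₁ ⊸ (c₂ ⊸ (... ⊸ (cₙ ⊸ d)...)). -/

import Mathlib

/-! Iterating (comp) along Δ turns `a ⊸ b` into `(Δ ⊸* a) ⊸ (Δ ⊸* b)`, and discharging the
antecedent `I ≤ Δ ⊸* a` by (unit) gives `a ⊸ b ≤ Δ ⊸* b`; monotonicity of `Γ ⊸* -` finishes. -/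

section Imploid

variable {P : Type*} [Preorder P] (imp : P → P → P)

theorem foldr_imp_mono
    (himp : ∀ ⦃a₁ a₂ b₁ b₂ : P⦄, a₂ ≤ a₁ → b₁ ≤ b₂ → imp a₁ b₁ ≤ imp a₂ b₂)
    (Γ : List P) {u v : P} (huv : u ≤ v) : Γ.foldr imp u ≤ Γ.foldr imp v := by
  induction Γ with
  | nil => exact huv
  | cons c Γ ih => exact himp le_rfl ih

theorem imp_le_imp_foldr_imp_foldr
    (hcomp : ∀ a b c : P, imp b c ≤ imp (imp a b) (imp a c)) (Δ : List P) (a b : P) :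
    imp a b ≤ imp (Δ.foldr imp a) (Δ.foldr imp b) := by
  induction Δ with
  | nil => exact le_rfl
  | cons c Δ ih => exact ih.trans (hcomp c _ _)

theorem imp_le_of_unit_le {I : P}
    (himp : ∀ ⦃a₁ a₂ b₁ b₂ : P⦄, a₂ ≤ a₁ → b₁ ≤ b₂ → imp a₁ b₁ ≤ imp a₂ b₂)
    (hunit : ∀ a : P, imp I a ≤ a) {x : P} (hx : I ≤ x) (y : P) : imp x y ≤ y :=
  (himp hx le_rfl).trans (hunit y)

end Imploid

theorem stmt15_general {P : Type*} [Preorder P] (imp : P → P → P) (I : P)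
    (himp : ∀ ⦃a₁ a₂ b₁ b₂ : P⦄, a₂ ≤ a₁ → b₁ ≤ b₂ → imp a₁ b₁ ≤ imp a₂ b₂)
    (hcomp : ∀ a b c : P, imp b c ≤ imp (imp a b) (imp a c))
    (hunit : ∀ a : P, imp I a ≤ a)
    (Γ Δ : List P) (a b : P)
    (h₁ : I ≤ Γ.foldr imp (imp a b))
    (h₂ : I ≤ Δ.foldr imp a) :
    I ≤ (Γ ++ Δ).foldr imp b := by
  have hab : imp a b ≤ Δ.foldr imp b :=
    (imp_le_imp_foldr_imp_foldr imp hcomp Δ a b).trans (imp_le_of_unit_le imp himp hunit h₂ _)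
  rw [List.foldr_append]
  exact h₁.trans (foldr_imp_mono imp himp Γ hab)

theorem stmt15 {P : Type*} [Preorder P] (imp : P → P → P) (I : P)
    (himp : ∀ ⦃a₁ a₂ b₁ b₂ : P⦄, a₂ ≤ a₁ → b₁ ≤ b₂ → imp a₁ b₁ ≤ imp a₂ b₂)
    (hcomp : ∀ a b c : P, imp b c ≤ imp (imp a b) (imp a c))
    (hid : ∀ a : P, I ≤ imp a a)
    (hunit : ∀ a : P, imp I a ≤ a)
    (hexch : ∀ a b c : P, imp a (imp b c) ≤ imp b (imp a c))
    (Γ Δ : List P) (a b : P)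
    (h₁ : I ≤ Γ.foldr imp (imp a b))
    (h₂ : I ≤ Δ.foldr imp a) :
    I ≤ (Γ ++ Δ).foldr imp b :=
  stmt15_general imp I himp hcomp hunit Γ Δ a b h₁ h₂
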